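/- Let t be a positive integer, f : X → X an acyclic function, and H a 4(6t)²-forward-independent hitting set for f. Then there exists an equivalence relation E on X such that every E-class has ρ_f-diameter at most 28t + 7 and, for every x ∈ X, the ball B_t(x) meets at most 2 E-classes. -/

import Mathlib

set_option linter.unusedVariables false

def Acyclic {X : Type*} (f : X → X) : Prop := ∀ x : X, ∀ k : ℕ, 1 ≤ k → f^[k] x ≠ x

def Hitting {X : Type*} (f : X → X) (H : Set X) : Prop :=
  ∀ x : X, ∃ k : ℕ, 1 ≤ k ∧ f^[k] x ∈ H

def FwdIndep {X : Type*} (f : X → X) (r : ℕ) (H : Set X) : Prop :=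
  ∀ x ∈ H, ∀ k : ℕ, 1 ≤ k → f^[k] x ∈ H → r < k

def funGraph {X : Type*} (f : X → X) : SimpleGraph X where
  Adj x y := x ≠ y ∧ (f x = y ∨ f y = x)
  symm := ⟨fun x y h => ⟨h.1.symm, h.2.symm⟩⟩
  loopless := ⟨fun x h => h.1 rfl⟩

/-- `x` and `y` are reachable from one another and at graph distance at most `r`
in the graph generated by `f`. -/
def distLE {X : Type*} (f : X → X) (r : ℕ) (x y : X) : Prop :=
  (funGraph f).Reachable x y ∧ (funGraph f).dist x y ≤ r

/-- The generating relation of the equivalence relation `F_t(U)`. -/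
def classRel {X : Type*} (f : X → X) (t : ℕ) (U : Set X) : X → X → Prop :=
  fun a b => a ∈ U ∧ b ∈ U ∧ distLE f t a b

/-- The ball of radius `t` around `x` in the graph generated by `f`. -/
def ball {X : Type*} (f : X → X) (t : ℕ) (x : X) : Set X := {y | distLE f t x y}

/-- A directed path of length `k` from `u` to `w` in the digraph `E`. -/
def DiPath {V : Type*} (E : V → V → Prop) (k : ℕ) (u w : V) : Prop :=
  ∃ p : ℕ → V, p 0 = u ∧ p k = w ∧ ∀ i < k, E (p i) (p (i+1))

/-- The digraph `D_r` on ℕ. -/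
def Drel (r : ℕ) (k l : ℕ) : Prop := (0 < k ∧ l = k - 1) ∨ (k = 0 ∧ r ≤ l)

/-- A directed path of length `k` from `u` to `w` staying inside `A`. -/
def PathIn {V : Type*} (E : V → V → Prop) (A : Set V) (k : ℕ) (u w : V) : Prop :=
  ∃ p : ℕ → V, p 0 = u ∧ p k = w ∧ (∀ i ≤ k, p i ∈ A) ∧ ∀ i < k, E (p i) (p (i+1))

/-- `A` is a strong connectivity component of the digraph `E`. -/
def IsSCC {V : Type*} (E : V → V → Prop) (A : Set V) : Prop :=
  (∀ v ∈ A, ∀ w ∈ A, ∃ k, PathIn E A k v w) ∧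
  ∀ B : Set V, A ⊆ B → (∀ v ∈ B, ∀ w ∈ B, ∃ k, PathIn E B k v w) → B = A

/-!
Measure the position of every point by its hitting time `τ`, the number of steps to the next
point of `H`, and mark the points whose hitting time is a positive multiple of `2t`. Marks on one
orbit are at least `2t` apart, and since consecutive points of `H` on an orbit are far apart,
every orbit segment of length `4t` contains a mark. Send every point `y` to its anchor, the first
mark at least `2t` steps ahead of `y`, and let `E` identify points with the same anchor. Then `y`
lies within `6t` of its anchor, so classes have diameter less than `12t`. If `y` is within `t` of
`x`, the forward orbits of `y` and `x` merge, and the anchor of `y` is the first mark on the orbit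
of `x` at least `c` steps ahead of `x`, for some `c ∈ [t, 3t]`. As marks are `2t` apart, only two
such first marks occur.
-/

section Walks

variable {X : Type*} {f : X → X}

lemma exists_walk_iterate (x : X) (k : ℕ) :
    ∃ p : (funGraph f).Walk x (f^[k] x), p.length ≤ k := by
  induction k with
  | zero => exact ⟨.nil, le_rfl⟩
  | succ k ih =>
    obtain ⟨p, hp⟩ := ih
    rw [Function.iterate_succ_apply']
    by_cases h : f^[k] x = f (f^[k] x)
    · exact ⟨p.copy rfl h, by rw [SimpleGraph.Walk.length_copy]; omega⟩
    · have hadj : (funGraph f).Adj (f^[k] x) (f (f^[k] x)) := ⟨h, Or.inl rfl⟩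
      exact ⟨p.concat hadj, by rw [SimpleGraph.Walk.length_concat]; omega⟩

lemma exists_iterate_eq_of_walk {x y : X} (p : (funGraph f).Walk x y) :
    ∃ a b, a + b ≤ p.length ∧ f^[a] x = f^[b] y := by
  induction p with
  | nil => exact ⟨0, 0, le_rfl, rfl⟩
  | @cons u v w huv p ih =>
    obtain ⟨a, b, hab, hm⟩ := ih
    rw [SimpleGraph.Walk.length_cons]
    rcases huv.2 with huv | hvu
    · exact ⟨a + 1, b, by omega, by rw [Function.iterate_succ_apply, huv, hm]⟩
    · cases a with
      | zero =>
        refine ⟨0, b + 1, by omega, ?_⟩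
        rw [Function.iterate_succ_apply', ← hm]
        simp only [Function.iterate_zero_apply, hvu]
      | succ a =>
        exact ⟨a, b, by omega, by rw [← hvu, ← Function.iterate_succ_apply, hm]⟩

lemma distLE.mono {r s : ℕ} {x y : X} (h : distLE f r x y) (hrs : r ≤ s) : distLE f s x y :=
  ⟨h.1, h.2.trans hrs⟩

lemma distLE_iff_exists_iterate_eq {r : ℕ} {x y : X} :
    distLE f r x y ↔ ∃ a b, a + b ≤ r ∧ f^[a] x = f^[b] y := by
  constructor
  · rintro ⟨hreach, hdist⟩
    obtain ⟨p, hp⟩ := hreach.exists_walk_length_eq_dist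
    obtain ⟨a, b, hab, hm⟩ := exists_iterate_eq_of_walk p
    exact ⟨a, b, by omega, hm⟩
  · rintro ⟨a, b, hab, hm⟩
    obtain ⟨p, hp⟩ := exists_walk_iterate (f := f) x a
    obtain ⟨q, hq⟩ := exists_walk_iterate (f := f) y b
    let w := p.append (q.reverse.copy hm.symm rfl)
    have hw : w.length ≤ r := by
      simp only [w, SimpleGraph.Walk.length_append, SimpleGraph.Walk.length_copy,
        SimpleGraph.Walk.length_reverse]
      omega
    exact ⟨⟨w⟩, (SimpleGraph.dist_le w).trans hw⟩

end Walks

lemma Function.iterate_eq_of_iterate_eq {X : Type*} {f : X → X} {x y : X} {i j e : ℕ}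
    (hm : f^[i] y = f^[j] x) (hie : i ≤ e) : f^[e] y = f^[e - i + j] x := by
  rw [← Nat.sub_add_cancel hie, Function.iterate_add_apply, hm, ← Function.iterate_add_apply,
    Nat.add_sub_cancel]

section FirstIterate

variable {X : Type*} (f : X → X) (P : X → Prop)

-- `sInf ∅ = 0`: the value is junk unless some `e ≥ s` has `P (f^[e] x)`.
noncomputable def firstIterate (s : ℕ) (x : X) : ℕ := sInf {e | s ≤ e ∧ P (f^[e] x)}

variable {f P} {s : ℕ} {x : X}

lemma firstIterate_spec (h : ∃ e, s ≤ e ∧ P (f^[e] x)) :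
    s ≤ firstIterate f P s x ∧ P (f^[firstIterate f P s x] x) :=
  Nat.sInf_mem h

lemma firstIterate_le {e : ℕ} (hs : s ≤ e) (he : P (f^[e] x)) : firstIterate f P s x ≤ e :=
  Nat.sInf_le ⟨hs, he⟩

lemma firstIterate_eq {n : ℕ} (hs : s ≤ n) (hn : P (f^[n] x))
    (hmin : ∀ e, s ≤ e → P (f^[e] x) → n ≤ e) : firstIterate f P s x = n := by
  obtain ⟨h₁, h₂⟩ := firstIterate_spec ⟨n, hs, hn⟩
  exact le_antisymm (firstIterate_le hs hn) (hmin _ h₁ h₂)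

lemma iterate_firstIterate_of_iterate_eq {y : X} {i j : ℕ} (h : ∃ e, s ≤ e ∧ P (f^[e] y))
    (hm : f^[i] y = f^[j] x) (his : i ≤ s) :
    f^[firstIterate f P s y] y = f^[firstIterate f P (s + j - i) x] x := by
  obtain ⟨hs, hP⟩ := firstIterate_spec h
  have hshift := Function.iterate_eq_of_iterate_eq hm (his.trans hs)
  rw [hshift] at hP ⊢
  rw [firstIterate_eq (by omega) hP]
  intro e he hPe
  rw [Function.iterate_eq_of_iterate_eq hm.symm (show j ≤ e by omega)] at hPe
  have := firstIterate_le (show s ≤ e - j + i by omega) hPe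
  omega

lemma firstIterate_eq_or_eq {L c₀ c : ℕ} (hex : ∀ s, ∃ e, s ≤ e ∧ P (f^[e] x))
    (hsep : ∀ a b, a < b → P (f^[a] x) → P (f^[b] x) → a + L ≤ b) (hc₀ : c₀ ≤ c)
    (hc : c ≤ c₀ + L) :
    firstIterate f P c x = firstIterate f P c₀ x ∨
      firstIterate f P c x = firstIterate f P (firstIterate f P c₀ x + 1) x := by
  set g₀ := firstIterate f P c₀ x
  obtain ⟨hg₀, hPg₀⟩ := firstIterate_spec (hex c₀)
  by_cases hcg : c ≤ g₀
  · exact .inl (firstIterate_eq hcg hPg₀ fun e hce hPe => firstIterate_le (hc₀.trans hce) hPe)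
  · right
    obtain ⟨hg₁, hPg₁⟩ := firstIterate_spec (hex (g₀ + 1))
    have := hsep _ _ hg₁ hPg₀ hPg₁
    exact firstIterate_eq (by omega) hPg₁ fun e hce hPe => firstIterate_le (by omega) hPe

end FirstIterate

section HitTime

variable {X : Type*} {f : X → X} {H : Set X}

lemma FwdIndep.mono {r s : ℕ} (h : FwdIndep f r H) (hsr : s ≤ r) : FwdIndep f s H :=
  fun x hx k hk hkx => hsr.trans_lt (h x hx k hk hkx)

open Classical in
noncomputable def hitTime (hH : Hitting f H) (x : X) : ℕ :=
  Nat.find ((hH x).imp fun _ hk => hk.2)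

variable (hH : Hitting f H) {x : X}

lemma iterate_hitTime_mem : f^[hitTime hH x] x ∈ H := by
  classical
  exact Nat.find_spec ((hH x).imp fun _ hk => hk.2)

lemma hitTime_le {k : ℕ} (h : f^[k] x ∈ H) : hitTime hH x ≤ k := by
  classical
  exact Nat.find_min' _ h

lemma hitTime_iterate {k : ℕ} (hk : k ≤ hitTime hH x) :
    hitTime hH (f^[k] x) = hitTime hH x - k := by
  have h₁ : hitTime hH (f^[k] x) ≤ hitTime hH x - k := hitTime_le hH (by
    rw [← Function.iterate_add_apply, Nat.sub_add_cancel hk]; exact iterate_hitTime_mem hH)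
  have h₂ : hitTime hH x ≤ hitTime hH (f^[k] x) + k := hitTime_le hH (by
    rw [Function.iterate_add_apply]; exact iterate_hitTime_mem hH)
  omega

lemma le_hitTime_of_mem {r : ℕ} (hInd : FwdIndep f r H) (hx : x ∈ H) :
    r ≤ hitTime hH (f x) := by
  have := hInd x hx (hitTime hH (f x) + 1) (by omega) (by
    rw [Function.iterate_succ_apply]; exact iterate_hitTime_mem hH)
  omega

def IsMark (L : ℕ) (z : X) : Prop := L ≤ hitTime hH z ∧ L ∣ hitTime hH z

lemma IsMark.add_le_of_lt {L a b : ℕ} (ha : IsMark hH L (f^[a] x)) (hb : IsMark hH L (f^[b] x))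
    (hab : a < b) : a + L ≤ b := by
  by_cases hba : b - a ≤ hitTime hH (f^[a] x)
  · have hτ := hitTime_iterate hH hba
    rw [← Function.iterate_add_apply, Nat.sub_add_cancel hab.le] at hτ
    have hdvd : L ∣ b - a := by
      have := Nat.dvd_sub ha.2 (hτ ▸ hb.2)
      rwa [Nat.sub_sub_self hba] at this
    have := Nat.le_of_dvd (by omega) hdvd
    omega
  · have := ha.1
    omega

lemma exists_isMark_iterate_lt_of_le {L : ℕ} (hL : 0 < L) (h : L ≤ hitTime hH x) :
    ∃ e < L, IsMark hH L (f^[e] x) := by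
  have hτ := hitTime_iterate hH (Nat.mod_le (hitTime hH x) L)
  have hdvd : L ∣ hitTime hH x - hitTime hH x % L := Nat.dvd_sub_mod _
  have hpos : 0 < hitTime hH x - hitTime hH x % L := by
    have := Nat.mod_lt (hitTime hH x) hL
    omega
  refine ⟨hitTime hH x % L, Nat.mod_lt _ hL, ?_⟩
  rw [IsMark, hτ]
  exact ⟨Nat.le_of_dvd hpos hdvd, hdvd⟩

lemma exists_isMark_iterate_lt {L : ℕ} (hL : 0 < L) (hInd : FwdIndep f L H) (x : X) :
    ∃ e < 2 * L, IsMark hH L (f^[e] x) := by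
  by_cases h : L ≤ hitTime hH x
  · obtain ⟨e, he, hmark⟩ := exists_isMark_iterate_lt_of_le hH hL h
    exact ⟨e, by omega, hmark⟩
  · have hnext : L ≤ hitTime hH (f^[hitTime hH x + 1] x) := by
      rw [Function.iterate_succ_apply']
      exact le_hitTime_of_mem hH hInd (iterate_hitTime_mem hH)
    obtain ⟨e, he, hmark⟩ := exists_isMark_iterate_lt_of_le hH hL hnext
    refine ⟨e + (hitTime hH x + 1), by omega, ?_⟩
    rwa [Function.iterate_add_apply]

end HitTime

section Anchor

variable {X : Type*} {f : X → X} {H : Set X} (hH : Hitting f H) (t : ℕ)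

noncomputable def anchorIndex (y : X) : ℕ := firstIterate f (IsMark hH (2 * t)) (2 * t) y

noncomputable def anchor (y : X) : X := f^[anchorIndex hH t y] y

variable {t}

lemma exists_isMark_iterate_ge (ht : 0 < t) (hInd : FwdIndep f (2 * t) H) (x : X) (s : ℕ) :
    ∃ e, s ≤ e ∧ IsMark hH (2 * t) (f^[e] x) := by
  obtain ⟨e, -, he⟩ := exists_isMark_iterate_lt hH (by omega) hInd (f^[s] x)
  exact ⟨e + s, by omega, by rwa [Function.iterate_add_apply]⟩

lemma anchorIndex_lt (ht : 0 < t) (hInd : FwdIndep f (2 * t) H) (y : X) :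
    anchorIndex hH t y < 6 * t := by
  obtain ⟨e, he, hmark⟩ := exists_isMark_iterate_lt hH (by omega) hInd (f^[2 * t] y)
  rw [← Function.iterate_add_apply] at hmark
  have := firstIterate_le (s := 2 * t) (by omega) hmark
  rw [anchorIndex]
  omega

lemma distLE_of_anchor_eq (ht : 0 < t) (hInd : FwdIndep f (2 * t) H) {y z : X}
    (h : anchor hH t y = anchor hH t z) : distLE f (12 * t) y z := by
  have hy := anchorIndex_lt hH ht hInd y
  have hz := anchorIndex_lt hH ht hInd z
  exact distLE_iff_exists_iterate_eq.2 ⟨_, _, by omega, h⟩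

lemma exists_anchor_eq_or_eq_of_mem_ball (ht : 0 < t) (hInd : FwdIndep f (2 * t) H) (x : X) :
    ∃ m₁ m₂ : ℕ, ∀ y ∈ ball f t x,
      anchor hH t y = f^[m₁] x ∨ anchor hH t y = f^[m₂] x := by
  set M := IsMark hH (2 * t)
  refine ⟨firstIterate f M t x, firstIterate f M (firstIterate f M t x + 1) x, fun y hy => ?_⟩
  obtain ⟨a, b, hab, hm⟩ := distLE_iff_exists_iterate_eq.1 hy
  have hanchor : anchor hH t y = f^[firstIterate f M (2 * t + a - b) x] x :=
    iterate_firstIterate_of_iterate_eq (exists_isMark_iterate_ge hH ht hInd y _) hm.symm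
      (by omega)
  rcases firstIterate_eq_or_eq (L := 2 * t) (exists_isMark_iterate_ge hH ht hInd x)
      (fun _ _ hab ha hb => ha.add_le_of_lt hH hb hab)
      (show t ≤ 2 * t + a - b by omega) (by omega) with h | h
  · exact .inl (by rw [hanchor, h])
  · exact .inr (by rw [hanchor, h])

end Anchor

lemma exists_finset_card_le_two_of_forall_eq_or_eq {α β : Type*} (φ : α → β) (s : Set α)
    (p q : β) (h : ∀ y ∈ s, φ y = p ∨ φ y = q) :
    ∃ r : Finset α, r.card ≤ 2 ∧ ∀ y ∈ s, ∃ z ∈ r, φ y = φ z := by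
  classical
  rcases isEmpty_or_nonempty α with hα | hα
  · exact ⟨∅, by simp, fun y => isEmptyElim y⟩
  refine ⟨({p, q} : Finset β).image (Function.invFun φ),
    Finset.card_image_le.trans Finset.card_le_two, fun y hy => ?_⟩
  refine ⟨Function.invFun φ (φ y), Finset.mem_image_of_mem _ ?_,
    (Function.invFun_eq ⟨y, rfl⟩).symm⟩
  rcases h y hy with h | h <;> simp [h]

theorem stmt14_general {X : Type*} (f : X → X) (t : ℕ) (ht : 1 ≤ t)
    (H : Set X) (hHit : Hitting f H) (hInd : FwdIndep f (4*(6*t)^2) H) :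
    ∃ E : X → X → Prop, Equivalence E ∧
      (∀ y z, E y z → distLE f (28*t+7) y z) ∧
      ∀ x : X, ∃ s : Finset X, s.card ≤ 2 ∧ ∀ y ∈ ball f t x, ∃ z ∈ s, E y z := by
  have hInd' : FwdIndep f (2 * t) H := hInd.mono (by nlinarith)
  refine ⟨fun y z => anchor hHit t y = anchor hHit t z, ⟨fun _ => rfl, Eq.symm, Eq.trans⟩,
    fun y z h => (distLE_of_anchor_eq hHit ht hInd' h).mono (by omega), fun x => ?_⟩
  obtain ⟨m₁, m₂, hm⟩ := exists_anchor_eq_or_eq_of_mem_ball hHit ht hInd' x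
  exact exists_finset_card_le_two_of_forall_eq_or_eq _ _ _ _ hm

theorem stmt14 {X : Type*} (f : X → X) (hf : Acyclic f) (t : ℕ) (ht : 1 ≤ t)
    (H : Set X) (hHit : Hitting f H) (hInd : FwdIndep f (4*(6*t)^2) H) :
    ∃ E : X → X → Prop, Equivalence E ∧
      (∀ y z, E y z → distLE f (28*t+7) y z) ∧
      ∀ x : X, ∃ s : Finset X, s.card ≤ 2 ∧ ∀ y ∈ ball f t x, ∃ z ∈ s, E y z :=
  stmt14_general f t ht H hHit hInd
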